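/- Let X be a finite connected preordered set with |X| ≥ 2, R a 2-torsion free commutative ring with unity, and suppose that for any two elements x, y ∈ X and any i ∈ X with x ≠ i ≠ y, every commuting map θ on I(X,R) with coefficients C^{ij}_{xy} := θ(e_{ij})(x,y) satisfies C^{ii}_{kk} = C^{ii}_{ll} whenever k < l and k ≠ i ≠ l. Then for every commuting map θ and all i < j, k < l, one has C^{ij}_{ij} = C^{kl}_{kl} provided every pair of directed edges of X lies on a common circle (the relation ≅ has a single equivalence class). -/

import Mathlib

/-!
Write `D p q := C^{pp}_{pp} - C^{pp}_{qq}`. Linearising `[θ(f), f] = 0` at `f = e_{ij} + e_{ii}` and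
`f = e_{ij} + e_{jj}` gives `D i j = C^{ij}_{ij} = D j i` for every edge `i < j`, and the hypothesis
on the diagonal coefficients says that `D p q` does not change when `q` moves along an edge avoiding
`p`. On a circle `v₀, v₁, …, v_{m-1}`, walking from `v_{t+2}` around to `v_t` while avoiding
`v_{t+1}` therefore yields `D v_{t+2} v_{t+1} = D v_{t+1} v_{t+2} = D v_{t+1} v_t`, so all edges of
the circle carry the same coefficient. Any two edges lie on a common circle.
-/

variable {X R : Type*} [Preorder X] [LocallyFiniteOrder X] [DecidableEq X] [CommRing R]

/-- Membership in the incidence algebra `I(X,R)`. -/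
def IsInc (f : X → X → R) : Prop := ∀ x y : X, ¬ x ≤ y → f x y = 0

/-- The convolution product of the incidence algebra. -/
def conv (f g : X → X → R) : X → X → R :=
  fun x y => ∑ z ∈ Finset.Icc x y, f x z * g z y

/-- The matrix unit `e_{ij}` of the incidence algebra. -/
def eunit (i j : X) : X → X → R := fun x y => if x = i ∧ y = j then 1 else 0

/-- A commuting map on the incidence algebra. -/
structure IsCommMap (θ : (X → X → R) → X → X → R) : Prop where
  map_inc : ∀ f, IsInc f → IsInc (θ f)
  map_add : ∀ f g, IsInc f → IsInc g → θ (f + g) = θ f + θ g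
  map_smul : ∀ (r : R) (f), IsInc f → θ (r • f) = r • θ f
  comm : ∀ f, IsInc f → conv (θ f) f = conv f (θ f)

/-- Comparability: `x ~ y` iff `x ≤ y` or `y ≤ x`. -/
def Cmp (x y : X) : Prop := x ≤ y ∨ y ≤ x

/-- A circle: `n + 2 ≥ 2` distinct vertices, cyclically consecutive ones comparable. -/
def IsCircle {n : ℕ} (f : Fin (n + 2) → X) : Prop :=
  Function.Injective f ∧ ∀ i, Cmp (f i) (f (i + 1))

/-- The relation `≅` on directed edges: `(x,y) ≅ (u,v)` iff some circle contains both
`x ~ y` and `u ~ v` as edges. -/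
def EdgeEquiv (x y u v : X) : Prop :=
  ∃ (n : ℕ) (f : Fin (n + 2) → X), IsCircle f ∧
    (∃ a b : Fin (n + 2), f a = x ∧ f b = y ∧ (b = a + 1 ∨ a = b + 1)) ∧
    (∃ c d : Fin (n + 2), f c = u ∧ f d = v ∧ (d = c + 1 ∨ c = d + 1))

section Arcs

open scoped Fin.NatCast

lemma Fin.apply_eq_apply_zero_of_apply_add_one {β : Type*} {m : ℕ} [NeZero m] {E : Fin m → β}
    (h : ∀ t, E (t + 1) = E t) (t : Fin m) : E t = E 0 := by
  have hcast : ∀ s : ℕ, E (s : Fin m) = E 0 := by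
    intro s
    induction s with
    | zero => rw [Nat.cast_zero]
    | succ s ih => rw [Nat.cast_succ, h, ih]
  simpa only [Fin.cast_val_eq_self] using hcast t

namespace IsCircle

variable {α β : Type*} [Preorder α] {n : ℕ} {f : Fin (n + 2) → α}

lemma apply_add_one_add_ne (hf : IsCircle f) (t : Fin (n + 2)) {s : ℕ} (hs : s ≤ n) :
    f (t + 1 + (s : Fin (n + 2))) ≠ f t := by
  intro h
  have h' : t + ((s + 1 : ℕ) : Fin (n + 2)) = t + 0 := by
    rw [add_zero, Nat.cast_succ, add_comm (s : Fin (n + 2)), ← add_assoc]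
    exact hf.1 h
  have hdvd := Fin.natCast_eq_zero.mp (add_left_cancel h')
  exact absurd (Nat.le_of_dvd (Nat.succ_pos s) hdvd) (by omega)

lemma apply_add_one_ne (hf : IsCircle f) (t : Fin (n + 2)) : f (t + 1) ≠ f t := by
  simpa only [Nat.cast_zero, add_zero] using hf.apply_add_one_add_ne t (Nat.zero_le n)

lemma apply_arc_eq (hf : IsCircle f) {φ : α → β} {t : Fin (n + 2)}
    (hφ : ∀ x y, Cmp x y → x ≠ y → x ≠ f t → y ≠ f t → φ x = φ y) :
    ∀ s : ℕ, s ≤ n → φ (f (t + 1 + (s : Fin (n + 2)))) = φ (f (t + 1))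
  | 0, _ => by rw [Nat.cast_zero, add_zero]
  | s + 1, hs => by
    rw [← apply_arc_eq hf hφ s (by omega), Nat.cast_succ, ← add_assoc]
    refine (hφ _ _ (hf.2 _) (hf.apply_add_one_ne _).symm
      (hf.apply_add_one_add_ne t (by omega)) ?_).symm
    rw [add_assoc, ← Nat.cast_succ]
    exact hf.apply_add_one_add_ne t hs

lemma apply_add_one_eq_apply_sub_one (hf : IsCircle f) {φ : α → β} {t : Fin (n + 2)}
    (hφ : ∀ x y, Cmp x y → x ≠ y → x ≠ f t → y ≠ f t → φ x = φ y) :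
    φ (f (t + 1)) = φ (f (t - 1)) := by
  have hwrap : t + 1 + (n : Fin (n + 2)) = t - 1 := by
    rw [eq_sub_iff_add_eq, add_assoc, add_assoc, add_eq_left, ← Nat.cast_one (R := Fin (n + 2)),
      ← Nat.cast_add, ← Nat.cast_add, show 1 + (n + 1) = n + 2 by omega, Fin.natCast_self]
  rw [← hwrap, hf.apply_arc_eq hφ n le_rfl]

end IsCircle

end Arcs

section Incidence

variable {α S : Type*} [Preorder α] [CommRing S]

lemma isInc_eunit [DecidableEq α] {i j : α} (h : i ≤ j) : IsInc (eunit i j : α → α → S) := by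
  intro x y hxy
  simp only [eunit, ite_eq_right_iff]
  rintro ⟨rfl, rfl⟩
  exact absurd h hxy

lemma isInc_add {f g : α → α → S} (hf : IsInc f) (hg : IsInc g) : IsInc (f + g) := by
  intro x y h
  simp [Pi.add_apply, hf x y h, hg x y h]

variable [LocallyFiniteOrder α]

lemma IsCommMap.conv_add_conv {θ : (α → α → S) → α → α → S}
    (hθ : IsCommMap θ) {f g : α → α → S} (hf : IsInc f) (hg : IsInc g) (x y : α) :
    conv (θ f) g x y + conv (θ g) f x y = conv f (θ g) x y + conv g (θ f) x y := by
  have hfg := congrFun₂ (hθ.comm (f + g) (isInc_add hf hg)) x y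
  have hf' := congrFun₂ (hθ.comm f hf) x y
  have hg' := congrFun₂ (hθ.comm g hg) x y
  rw [hθ.map_add f g hf hg] at hfg
  simp only [conv, Pi.add_apply, add_mul, mul_add, Finset.sum_add_distrib] at hfg hf' hg' ⊢
  linear_combination hfg - hf' - hg'

variable [DecidableEq α]

lemma conv_eunit_right (f : α → α → S) (i j x y : α) :
    conv f (eunit i j) x y = if y = j ∧ i ∈ Finset.Icc x y then f x i else 0 := by
  simp only [conv, eunit, mul_ite, mul_one, mul_zero]
  by_cases hy : y = j
  · simp only [hy, and_true, true_and, Finset.sum_ite_eq']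
  · simp [hy]

lemma conv_eunit_left (f : α → α → S) (i j x y : α) :
    conv (eunit i j) f x y = if x = i ∧ j ∈ Finset.Icc x y then f j y else 0 := by
  simp only [conv, eunit, ite_mul, one_mul, zero_mul]
  by_cases hx : x = i
  · simp only [hx, true_and, Finset.sum_ite_eq']
  · simp [hx]

end Incidence

section DiagGap

variable {α S : Type*} [Preorder α] [DecidableEq α] [CommRing S]

def diagGap (θ : (α → α → S) → α → α → S) (p q : α) : S :=
  θ (eunit p p) p p - θ (eunit p p) q q

/-- The strengthened relation (R3). -/
def DiagConstOffVertex (θ : (α → α → S) → α → α → S) : Prop :=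
  ∀ i k l : α, k ≤ l → k ≠ l → k ≠ i → l ≠ i → θ (eunit i i) k k = θ (eunit i i) l l

variable {θ : (α → α → S) → α → α → S}

lemma DiagConstOffVertex.diagGap_eq (hdiag : DiagConstOffVertex θ)
    {p q r : α} (hqr : Cmp q r) (hne : q ≠ r) (hq : q ≠ p) (hr : r ≠ p) :
    diagGap θ p q = diagGap θ p r := by
  rcases hqr with h | h
  · rw [diagGap, hdiag p q r h hne hq hr, diagGap]
  · rw [diagGap, ← hdiag p r q h hne.symm hr hq, diagGap]

variable [LocallyFiniteOrder α]

namespace IsCommMap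

lemma diagGap_eq_apply_eunit (hθ : IsCommMap θ) {i j : α} (hij : i ≤ j) (hne : i ≠ j) :
    diagGap θ i j = θ (eunit i j) i j := by
  have h := hθ.conv_add_conv (isInc_eunit hij) (isInc_eunit (le_refl i)) i j
  simp only [conv_eunit_right, conv_eunit_left, Finset.mem_Icc, hij, hne.symm, le_refl, and_self,
    and_true, if_true, if_false, zero_add] at h
  rw [diagGap, h, add_sub_cancel_left]

lemma diagGap_swap_eq_apply_eunit (hθ : IsCommMap θ) {i j : α} (hij : i ≤ j) (hne : i ≠ j) :
    diagGap θ j i = θ (eunit i j) i j := by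
  have h := hθ.conv_add_conv (isInc_eunit hij) (isInc_eunit (le_refl j)) i j
  simp only [conv_eunit_right, conv_eunit_left, Finset.mem_Icc, hij, hne, le_refl, and_self,
    and_true, if_true, if_false, add_zero] at h
  rw [diagGap, ← h, add_sub_cancel_right]

lemma diagGap_comm (hθ : IsCommMap θ) {p q : α} (hpq : Cmp p q) (hne : p ≠ q) :
    diagGap θ p q = diagGap θ q p := by
  rcases hpq with h | h
  · rw [hθ.diagGap_eq_apply_eunit h hne, hθ.diagGap_swap_eq_apply_eunit h hne]
  · rw [hθ.diagGap_eq_apply_eunit h hne.symm, hθ.diagGap_swap_eq_apply_eunit h hne.symm]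

variable {n : ℕ} {f : Fin (n + 2) → α}

lemma diagGap_circle_succ (hθ : IsCommMap θ) (hdiag : DiagConstOffVertex θ) (hf : IsCircle f)
    (t : Fin (n + 2)) :
    diagGap θ (f (t + 1 + 1)) (f (t + 1)) = diagGap θ (f (t + 1)) (f t) :=
  calc diagGap θ (f (t + 1 + 1)) (f (t + 1))
      = diagGap θ (f (t + 1)) (f (t + 1 + 1)) :=
        (hθ.diagGap_comm (hf.2 _) (hf.apply_add_one_ne _).symm).symm
    _ = diagGap θ (f (t + 1)) (f (t + 1 - 1)) :=
        hf.apply_add_one_eq_apply_sub_one fun _ _ => hdiag.diagGap_eq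
    _ = diagGap θ (f (t + 1)) (f t) := by rw [add_sub_cancel_right]

lemma diagGap_circle_eq (hθ : IsCommMap θ) (hdiag : DiagConstOffVertex θ) (hf : IsCircle f)
    (t : Fin (n + 2)) : diagGap θ (f (t + 1)) (f t) = diagGap θ (f 1) (f 0) := by
  simpa only [zero_add] using Fin.apply_eq_apply_zero_of_apply_add_one
    (E := fun t => diagGap θ (f (t + 1)) (f t)) (hθ.diagGap_circle_succ hdiag hf) t

lemma apply_eunit_eq_of_circle (hθ : IsCommMap θ) (hdiag : DiagConstOffVertex θ)
    (hf : IsCircle f) {i j : α} (hij : i ≤ j) (hne : i ≠ j) {a b : Fin (n + 2)} (ha : f a = i)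
    (hb : f b = j) (hab : b = a + 1 ∨ a = b + 1) :
    θ (eunit i j) i j = diagGap θ (f 1) (f 0) := by
  rcases hab with rfl | rfl
  · rw [← hθ.diagGap_swap_eq_apply_eunit hij hne, ← ha, ← hb, hθ.diagGap_circle_eq hdiag hf]
  · rw [← hθ.diagGap_eq_apply_eunit hij hne, ← ha, ← hb, hθ.diagGap_circle_eq hdiag hf]

end IsCommMap

end DiagGap

theorem edge_coeff_constant_general
    (hdiag : ∀ θ : (X → X → R) → X → X → R, IsCommMap θ →
      ∀ i k l : X, k ≤ l → k ≠ l → k ≠ i → l ≠ i →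
        θ (eunit i i) k k = θ (eunit i i) l l)
    (hcircle : ∀ x y u v : X, x ≤ y → x ≠ y → u ≤ v → u ≠ v → EdgeEquiv x y u v) :
    ∀ θ : (X → X → R) → X → X → R, IsCommMap θ →
      ∀ i j k l : X, i ≤ j → i ≠ j → k ≤ l → k ≠ l →
        θ (eunit i j) i j = θ (eunit k l) k l := by
  intro θ hθ i j k l hij hnij hkl hnkl
  obtain ⟨n, f, hf, ⟨a, b, ha, hb, hab⟩, ⟨c, d, hc, hd, hcd⟩⟩ := hcircle i j k l hij hnij hkl hnkl
  rw [hθ.apply_eunit_eq_of_circle (hdiag θ hθ) hf hij hnij ha hb hab,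
    hθ.apply_eunit_eq_of_circle (hdiag θ hθ) hf hkl hnkl hc hd hcd]

/-- for a finite connected preordered set `X` with `|X| ≥ 2` over a
`2`-torsion free `R`: if the diagonal coefficients of every commuting map are constant off
`i` (relation (R3) strengthened), and all directed edges of `X` lie in a single `≅`-class,
then `C^{ij}_{ij} = C^{kl}_{kl}` for all edges `i < j`, `k < l`, for every commuting map. -/
theorem edge_coeff_constant [Fintype X] (hcard : 2 ≤ Fintype.card X)
    (hconn : ∀ x y : X, Relation.ReflTransGen Cmp x y)
    (htf : ∀ a : R, a + a = 0 → a = 0)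
    (hdiag : ∀ θ : (X → X → R) → X → X → R, IsCommMap θ →
      ∀ i k l : X, k ≤ l → k ≠ l → k ≠ i → l ≠ i →
        θ (eunit i i) k k = θ (eunit i i) l l)
    (hcircle : ∀ x y u v : X, x ≤ y → x ≠ y → u ≤ v → u ≠ v → EdgeEquiv x y u v) :
    ∀ θ : (X → X → R) → X → X → R, IsCommMap θ →
      ∀ i j k l : X, i ≤ j → i ≠ j → k ≤ l → k ≠ l →
        θ (eunit i j) i j = θ (eunit k l) k l :=
  edge_coeff_constant_general hdiag hcircle
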